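/- arXiv:2003.00001 — 6 statements merged into one kernel-verified Lean document; each statement's English description precedes it below -/
import Mathlib

section
/- If X_z is negative binomial with parameters (z, p) (number of failures before the z-th success, failure probability q = 1 - p with 0 < q < 1/2), and for k ≤ z the catch-up probability from deficit z - k is (q/p)^{z-k}, then the total double spend success probability P(z) = P[X_z > z] + ∑_{k=0}^{z} P[X_z = k] (q/p)^{z-k} equals I_{4pq}(z, 1/2), the regularized incomplete beta function evaluated at 4pq with parameters (z, 1/2). -/
open Real

/-- The regularized incomplete beta function
`I_x(a,b) = Γ(a+b)/(Γ(a)Γ(b)) ∫_0^x t^(a-1) (1-t)^(b-1) dt`. -/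
noncomputable def regIncBeta (x a b : ℝ) : ℝ :=
  Real.Gamma (a + b) / (Real.Gamma a * Real.Gamma b)
    * ∫ t in (0:ℝ)..x, t ^ (a - 1) * (1 - t) ^ (b - 1)

/-!
Write `p = 1 - q` and let `L x = P[X_z < z]` when the failure probability is `x`. The catch-up
factor `(q/p)^(z-k)` turns `P[X_z = k]` into the negative binomial weight with `p` and `q`
exchanged, and the terms `k = z` of the two sums coincide, so `P(z) = 1 - L q + L p`.
Differentiating the sum defining `L` telescopes to `L' x = -z C(2z-1, z) (x(1-x))^(z-1)`, hence
`P(z) = 2 z C(2z-1, z) ∫_0^q (u(1-u))^(z-1) du`. The substitution `t = 4u(1-u)`, for which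
`1 - t = (1-2u)^2`, turns this into the incomplete beta integral
`∫_0^{4pq} t^(z-1) (1-t)^(-1/2) dt`, and Legendre's duplication formula identifies the constant.
-/

open Finset
open scoped Nat

noncomputable def negBinomialPMF (z : ℕ) (p q : ℝ) (k : ℕ) : ℝ :=
  ((k + z - 1).choose k : ℝ) * p ^ z * q ^ k

theorem hasSum_negBinomialPMF {q : ℝ} (hq : ‖q‖ < 1) {z : ℕ} (hz : 1 ≤ z) :
    HasSum (negBinomialPMF z (1 - q) q) 1 := by
  obtain ⟨n, rfl⟩ : ∃ n, z = n + 1 := ⟨z - 1, by omega⟩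
  have hq1 : 1 - q ≠ 0 := sub_ne_zero.mpr fun h => by simp [← h] at hq
  have h := (hasSum_choose_mul_geometric_of_norm_lt_one n hq).mul_left ((1 - q) ^ (n + 1))
  rw [mul_one_div_cancel (pow_ne_zero _ hq1)] at h
  refine h.congr_fun fun k => ?_
  rw [negBinomialPMF, show k + (n + 1) - 1 = k + n by omega, Nat.choose_symm_add]
  ring

theorem HasSum.tsum_ite_lt {α : Type*} [AddCommGroup α] [TopologicalSpace α]
    [IsTopologicalAddGroup α] [T2Space α] {f : ℕ → α} {a : α} (hf : HasSum f a) (n : ℕ) :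
    ∑' k, (if n < k then f k else 0) = a - ∑ k ∈ range (n + 1), f k := by
  have hhead : HasSum (fun k => if n < k then 0 else f k) (∑ k ∈ range (n + 1), f k) := by
    have h : HasSum (fun k => if n < k then 0 else f k)
        (∑ k ∈ range (n + 1), if n < k then 0 else f k) :=
      hasSum_sum_of_ne_finset_zero fun k hk => by simp_all
    rwa [sum_congr rfl fun k hk => if_neg (not_lt.mpr (mem_range_succ_iff.mp hk))] at h
  refine ((hf.sub hhead).congr_fun fun k => ?_).tsum_eq
  split_ifs <;> simp

theorem negBinomialPMF_mul_div_pow {p : ℝ} (hp : p ≠ 0) (q : ℝ) {z k : ℕ} (hk : k ≤ z) :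
    negBinomialPMF z p q k * (q / p) ^ (z - k) = negBinomialPMF z q p k := by
  obtain ⟨m, rfl⟩ := Nat.exists_eq_add_of_le hk
  rw [negBinomialPMF, negBinomialPMF, Nat.add_sub_cancel_left, div_pow]
  field_simp
  ring

noncomputable def negBinomialLowerTail (z : ℕ) (x : ℝ) : ℝ :=
  ∑ k ∈ range z, negBinomialPMF z (1 - x) x k

-- The derivative is written as `u k - u (k + 1)` with `u j = j * C(j + z - 1, j) * x ^ (j - 1)`,
-- so that summing over `k < z` telescopes.
theorem hasDerivAt_negBinomialPMF {z : ℕ} (hz : 1 ≤ z) (k : ℕ) (x : ℝ) :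
    HasDerivAt (fun x => negBinomialPMF z (1 - x) x k)
      ((k * (k + z - 1).choose k * x ^ (k - 1)
        - (k + 1 : ℕ) * (k + 1 + z - 1).choose (k + 1) * x ^ (k + 1 - 1))
        * (1 - x) ^ (z - 1)) x := by
  have h := ((((hasDerivAt_id' x).const_sub 1).fun_pow z).const_mul
    ((k + z - 1).choose k : ℝ)).mul (hasDerivAt_pow k x)
  refine h.congr_deriv ?_
  obtain ⟨n, rfl⟩ : ∃ n, z = n + 1 := ⟨z - 1, by omega⟩
  have hchoose : ((k + 1 : ℕ) : ℝ) * (k + 1 + (n + 1) - 1).choose (k + 1)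
      = (k + n + 1) * (k + (n + 1) - 1).choose k := by
    rw [show k + 1 + (n + 1) - 1 = k + n + 1 by omega, show k + (n + 1) - 1 = k + n by omega]
    exact_mod_cast (mul_comm _ _).trans (Nat.add_one_mul_choose_eq (k + n) k).symm
  rw [hchoose]
  rcases k with _ | j
  · simp only [zero_add, Nat.add_sub_cancel, Nat.choose_zero_right, pow_zero]
    push_cast
    ring
  · simp only [Nat.add_sub_cancel, pow_succ]
    push_cast
    ring

theorem hasDerivAt_negBinomialLowerTail {z : ℕ} (hz : 1 ≤ z) (x : ℝ) :
    HasDerivAt (negBinomialLowerTail z)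
      (-(z * (2 * z - 1).choose z) * (x * (1 - x)) ^ (z - 1)) x := by
  have h := HasDerivAt.fun_sum fun k (_ : k ∈ range z) => hasDerivAt_negBinomialPMF hz k x
  rw [← sum_mul,
    sum_range_sub' fun j : ℕ => (j * (j + z - 1).choose j * x ^ (j - 1) : ℝ)] at h
  refine (h.congr_deriv ?_).congr_of_eventuallyEq ?_
  · rw [show z + z - 1 = 2 * z - 1 by omega, mul_pow]
    push_cast
    ring
  · exact Filter.Eventually.of_forall fun y => by simp [negBinomialLowerTail]

theorem negBinomialLowerTail_zero {z : ℕ} (hz : 1 ≤ z) : negBinomialLowerTail z 0 = 1 := by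
  rw [negBinomialLowerTail, sum_eq_single_of_mem 0 (mem_range.mpr hz) fun k _ hk => by
    simp [negBinomialPMF, hk]]
  simp [negBinomialPMF]

theorem negBinomialLowerTail_one {z : ℕ} (hz : 1 ≤ z) : negBinomialLowerTail z 1 = 0 :=
  sum_eq_zero fun k _ => by simp [negBinomialPMF, Nat.one_le_iff_ne_zero.mp hz]

theorem one_sub_negBinomialLowerTail_add_eq_integral {z : ℕ} (hz : 1 ≤ z) (q : ℝ) :
    1 - negBinomialLowerTail z q + negBinomialLowerTail z (1 - q)
      = 2 * (z * (2 * z - 1).choose z) * ∫ u in (0:ℝ)..q, (u * (1 - u)) ^ (z - 1) := by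
  have hderiv (x : ℝ) : HasDerivAt
      (fun x => 1 - negBinomialLowerTail z x + negBinomialLowerTail z (1 - x))
      (2 * (z * (2 * z - 1).choose z) * (x * (1 - x)) ^ (z - 1)) x := by
    have h := ((hasDerivAt_const x 1).sub (hasDerivAt_negBinomialLowerTail hz x)).add
      ((hasDerivAt_negBinomialLowerTail hz (1 - x)).comp x ((hasDerivAt_id x).const_sub 1))
    refine h.congr_deriv ?_
    rw [sub_sub_cancel]
    ring
  rw [← intervalIntegral.integral_const_mul, intervalIntegral.integral_eq_sub_of_hasDerivAt
    (fun x _ => hderiv x) (by apply Continuous.intervalIntegrable; fun_prop),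
    sub_zero, negBinomialLowerTail_zero hz, negBinomialLowerTail_one hz]
  ring

theorem integral_rpow_mul_one_sub_rpow_neg_half {z : ℕ} (hz : 1 ≤ z) {q : ℝ}
    (hq : q < 1 / 2) :
    ∫ t in (0:ℝ)..4 * (1 - q) * q, t ^ ((z : ℝ) - 1) * (1 - t) ^ ((1:ℝ) / 2 - 1)
      = 4 ^ z * ∫ u in (0:ℝ)..q, (u * (1 - u)) ^ (z - 1) := by
  have hcast : (z : ℝ) - 1 = ((z - 1 : ℕ) : ℝ) := by push_cast [Nat.cast_sub hz]; ring
  simp only [hcast, rpow_natCast]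
  have hlt : ∀ u ∈ Set.uIcc 0 q, 0 < 1 - 2 * u := fun u hu => by
    rcases Set.mem_uIcc.mp hu with h | h <;> linarith [h.2]
  have hderiv : ∀ u ∈ Set.uIcc 0 q, HasDerivAt (fun u : ℝ => 4 * (1 - u) * u) (4 - 8 * u) u :=
    fun u _ => ((((hasDerivAt_id' u).const_sub 1).const_mul 4).fun_mul
      (hasDerivAt_id' u)).congr_deriv (by ring)
  have hcont : ContinuousOn (fun t : ℝ => t ^ (z - 1) * (1 - t) ^ ((1:ℝ) / 2 - 1))
      ((fun u : ℝ => 4 * (1 - u) * u) '' Set.uIcc 0 q) := by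
    refine (continuousOn_pow _).mul (ContinuousOn.rpow_const (by fun_prop) ?_)
    rintro _ ⟨u, hu, rfl⟩
    left
    nlinarith [hlt u hu]
  have hintegrand : ∀ u ∈ Set.uIcc 0 q,
      (4 * (1 - u) * u) ^ (z - 1) * (1 - 4 * (1 - u) * u) ^ ((1:ℝ) / 2 - 1) * (4 - 8 * u)
        = 4 ^ z * (u * (1 - u)) ^ (z - 1) := fun u hu => by
    have h2u := hlt u hu
    have hsq : (1 - 4 * (1 - u) * u) ^ ((1:ℝ) / 2 - 1) = (1 - 2 * u)⁻¹ := by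
      rw [show 1 - 4 * (1 - u) * u = (1 - 2 * u) ^ (2:ℝ) by norm_cast; ring,
        ← rpow_mul h2u.le]
      norm_num [rpow_neg_one]
    obtain ⟨n, rfl⟩ : ∃ n, z = n + 1 := ⟨z - 1, by omega⟩
    rw [hsq, Nat.add_sub_cancel, show 4 * (1 - u) * u = 4 * (u * (1 - u)) by ring, mul_pow,
      show 4 - 8 * u = 4 * (1 - 2 * u) by ring]
    linear_combination 4 ^ (n + 1) * (u * (1 - u)) ^ n * inv_mul_cancel₀ h2u.ne'
  have h := intervalIntegral.integral_comp_mul_deriv' hderiv (by fun_prop) hcont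
  simp only [Function.comp_apply, mul_zero] at h
  rw [← h, intervalIntegral.integral_congr hintegrand, intervalIntegral.integral_const_mul]

theorem Gamma_add_half_div_mul_four_pow {z : ℕ} (hz : 1 ≤ z) :
    Gamma ((z : ℝ) + 1 / 2) / (Gamma z * Gamma (1 / 2)) * 4 ^ z
      = 2 * (z * (2 * z - 1).choose z) := by
  obtain ⟨n, rfl⟩ : ∃ n, z = n + 1 := ⟨z - 1, by omega⟩
  have hdup := Gamma_mul_Gamma_add_half ((n + 1 : ℕ) : ℝ)
  have hGz : Gamma ((n + 1 : ℕ) : ℝ) = n ! := by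
    rw [Nat.cast_succ, Gamma_nat_eq_factorial]
  have hG2z : Gamma (2 * ((n + 1 : ℕ) : ℝ)) = (2 * n + 1)! := by
    rw [show 2 * ((n + 1 : ℕ) : ℝ) = ((2 * n + 1 : ℕ) : ℝ) + 1 by push_cast; ring,
      Gamma_nat_eq_factorial]
  have hfact : ((2 * n + 1)! : ℝ) = (n + 1) * (2 * n + 1).choose (n + 1) * (n ! * n !) := by
    have h := Nat.choose_mul_factorial_mul_factorial (show n + 1 ≤ 2 * n + 1 by omega)
    rw [show 2 * n + 1 - (n + 1) = n by omega, Nat.factorial_succ] at h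
    rw [← h]
    push_cast
    ring
  have hpow : (2 : ℝ) ^ (1 - 2 * ((n + 1 : ℕ) : ℝ)) * 4 ^ (n + 1) = 2 := by
    rw [show (4 : ℝ) ^ (n + 1) = 2 ^ ((2 * (n + 1) : ℕ) : ℝ) by
        norm_cast; rw [pow_mul]; norm_num,
      ← rpow_add two_pos]
    push_cast
    norm_num
  have hn : (n ! : ℝ) ≠ 0 := by positivity
  rw [hGz, hG2z, hfact] at hdup
  have hhalf : Gamma ((n + 1 : ℕ) + 1 / 2)
      = (n + 1) * (2 * n + 1).choose (n + 1) * n ! * 2 ^ (1 - 2 * ((n + 1 : ℕ) : ℝ)) * √π :=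
    mul_left_cancel₀ hn (by rw [hdup]; ring)
  rw [hhalf, hGz, Gamma_one_half_eq, show 2 * (n + 1) - 1 = 2 * n + 1 by omega]
  field_simp
  push_cast at hpow ⊢
  linear_combination (n + 1) * ((2 * n + 1).choose (n + 1) : ℝ) * hpow

/-- The probability of success of a double spend after `z` confirmations:
`P[X_z > z] + ∑_{k=0}^{z} P[X_z = k] (q/p)^(z-k) = I_{4pq}(z, 1/2)`,
where `X_z` is negative binomial with parameters `(z, p)`. -/
theorem double_spend_probability (q : ℝ) (hq0 : 0 < q) (hq1 : q < 1/2)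
    (p : ℝ) (hp : p = 1 - q) (z : ℕ) (hz : 1 ≤ z) :
    (∑' k : ℕ, if z < k then ((k + z - 1).choose k : ℝ) * p ^ z * q ^ k else 0)
      + (∑ k ∈ Finset.range (z + 1),
          ((k + z - 1).choose k : ℝ) * p ^ z * q ^ k * (q / p) ^ (z - k))
      = regIncBeta (4 * p * q) z (1/2) := by
  subst hp
  have hq : ‖q‖ < 1 := by rw [Real.norm_of_nonneg hq0.le]; linarith
  have hcatch : ∑ k ∈ range (z + 1), negBinomialPMF z (1 - q) q k * (q / (1 - q)) ^ (z - k)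
      = ∑ k ∈ range (z + 1), negBinomialPMF z q (1 - q) k :=
    sum_congr rfl fun k hk =>
      negBinomialPMF_mul_div_pow (by linarith) q (mem_range_succ_iff.mp hk)
  have hdiag : negBinomialPMF z (1 - q) q z = negBinomialPMF z q (1 - q) z := by
    simp only [negBinomialPMF]; ring
  calc (∑' k, if z < k then negBinomialPMF z (1 - q) q k else 0)
        + ∑ k ∈ range (z + 1), negBinomialPMF z (1 - q) q k * (q / (1 - q)) ^ (z - k)
      = 1 - negBinomialLowerTail z q + negBinomialLowerTail z (1 - q) := by
        rw [(hasSum_negBinomialPMF hq hz).tsum_ite_lt, hcatch, sum_range_succ, sum_range_succ,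
          hdiag, negBinomialLowerTail, negBinomialLowerTail, sub_sub_cancel]
        ring
    _ = 2 * (z * (2 * z - 1).choose z) * ∫ u in (0:ℝ)..q, (u * (1 - u)) ^ (z - 1) :=
        one_sub_negBinomialLowerTail_add_eq_integral hz q
    _ = regIncBeta (4 * (1 - q) * q) z (1 / 2) := by
        rw [regIncBeta, integral_rpow_mul_one_sub_rpow_neg_half hz hq1,
          ← Gamma_add_half_div_mul_four_pow hz]
        ring
end

section
/- Let 0 < q < 1/2, p = 1 - q, s = 4pq < 1, and P(z) = I_s(z, 1/2) the regularized incomplete beta function. Then as z → ∞, P(z) ~ s^z / sqrt(π(1-s)z), i.e., the ratio P(z) · sqrt(π(1-s)z) / s^z tends to 1. -/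
open Real Filter Topology

/-!
With `z = n + 1`, `P(z) = Γ(z + 1/2) / (Γ(z) √π) · ∫₀ˢ tⁿ (1 - t)^(-1/2) dt`. Log-convexity of `Γ`
(applied at `z, z + 1` and at `z - 1/2, z + 1/2`) squeezes `Γ(z + 1/2) / Γ(z)` between `√(z - 1/2)`
and `√z`. The weights `(n + 1) tⁿ / sⁿ⁺¹` are probability densities on `[0, s]` concentrating at
`t = s`, where `(1 - t)^(-1/2)` is Lipschitz, so `z s⁻ᶻ ∫₀ˢ tⁿ (1 - t)^(-1/2) dt → (1 - s)^(-1/2)`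
with error `O(1/z)`. Multiplying, the factors `√z`, `√π` and `√(1 - s)` cancel.
-/

open MeasureTheory Set

namespace Real

theorem Gamma_add_half_le_sqrt_mul_Gamma {x : ℝ} (hx : 0 < x) :
    Gamma (x + 1 / 2) ≤ √x * Gamma x := by
  have hΓ := (Gamma_pos_of_pos hx).le
  have h := Gamma_mul_add_mul_le_rpow_Gamma_mul_rpow_Gamma hx (by linarith : 0 < x + 1)
    (by norm_num : (0 : ℝ) < 1 / 2) (by norm_num : (0 : ℝ) < 1 / 2) (by norm_num)
  rw [← sqrt_eq_rpow, ← sqrt_eq_rpow, ← sqrt_mul hΓ, Gamma_add_one hx.ne'] at h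
  calc Gamma (x + 1 / 2) = Gamma (1 / 2 * x + 1 / 2 * (x + 1)) := by ring_nf
    _ ≤ √(Gamma x * (x * Gamma x)) := h
    _ = √x * Gamma x := by
      rw [show Gamma x * (x * Gamma x) = x * Gamma x ^ 2 by ring, sqrt_mul hx.le, sqrt_sq hΓ]

theorem sqrt_sub_half_mul_Gamma_le_Gamma_add_half {x : ℝ} (hx : 1 / 2 < x) :
    √(x - 1 / 2) * Gamma x ≤ Gamma (x + 1 / 2) := by
  have h := Gamma_add_half_le_sqrt_mul_Gamma (sub_pos.2 hx)
  rw [sub_add_cancel] at h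
  have hrec : Gamma (x + 1 / 2) = (x - 1 / 2) * Gamma (x - 1 / 2) := by
    rw [← Gamma_add_one (by linarith)]; ring_nf
  calc √(x - 1 / 2) * Gamma x ≤ √(x - 1 / 2) * (√(x - 1 / 2) * Gamma (x - 1 / 2)) := by gcongr
    _ = Gamma (x + 1 / 2) := by rw [← mul_assoc, mul_self_sqrt (by linarith), hrec]

theorem tendsto_Gamma_add_half_div_Gamma_mul_sqrt :
    Tendsto (fun x => Gamma (x + 1 / 2) / (Gamma x * √x)) atTop (𝓝 1) := by
  have hlower : Tendsto (fun x : ℝ => √(1 - 1 / 2 * x⁻¹)) atTop (𝓝 1) := by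
    simpa using ((tendsto_inv_atTop_zero.const_mul (1 / 2 : ℝ)).const_sub 1).sqrt
  refine tendsto_of_tendsto_of_tendsto_of_le_of_le' hlower tendsto_const_nhds ?_ ?_
  · filter_upwards [eventually_gt_atTop 1] with x hx
    have hsqrt : √(1 - 1 / 2 * x⁻¹) * √x = √(x - 1 / 2) := by
      have hx' : 1 / 2 * x⁻¹ ≤ 1 := by
        rw [← div_eq_mul_inv, div_le_one₀ (by linarith)]; linarith
      rw [← sqrt_mul (sub_nonneg.2 hx')]
      congr 1
      field_simp
    rw [le_div_iff₀ (by positivity), mul_left_comm, hsqrt, mul_comm]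
    exact sqrt_sub_half_mul_Gamma_le_Gamma_add_half (by linarith)
  · filter_upwards [eventually_gt_atTop 0] with x hx
    rw [div_le_one (by have := Gamma_pos_of_pos hx; positivity), mul_comm]
    exact Gamma_add_half_le_sqrt_mul_Gamma hx

end Real

theorem integral_pow_mul_sub (s : ℝ) (n : ℕ) :
    ∫ t in (0 : ℝ)..s, t ^ n * (s - t) = s ^ (n + 2) / ((n + 1) * (n + 2)) := by
  have hpow (k : ℕ) : IntervalIntegrable (fun t : ℝ => t ^ k) volume 0 s :=
    (continuous_pow k).intervalIntegrable 0 s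
  simp_rw [mul_sub, ← pow_succ, mul_comm _ s]
  rw [intervalIntegral.integral_sub ((hpow n).const_mul s) (hpow _),
    intervalIntegral.integral_const_mul, integral_pow, integral_pow]
  field_simp
  push_cast
  ring

theorem abs_mul_integral_pow_mul_div_pow_sub_le {g : ℝ → ℝ} {s C : ℝ} (hs : 0 < s)
    (hg : IntervalIntegrable g volume 0 s)
    (hgs : ∀ t ∈ Icc 0 s, |g t - g s| ≤ C * (s - t)) (n : ℕ) :
    |(n + 1) * (∫ t in (0 : ℝ)..s, t ^ n * g t) / s ^ (n + 1) - g s| ≤ C * s / (n + 2) := by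
  have hpow : ContinuousOn (fun t : ℝ => t ^ n) (uIcc 0 s) := (continuous_pow n).continuousOn
  have hdiff : ∫ t in (0 : ℝ)..s, t ^ n * g t
      = (∫ t in (0 : ℝ)..s, t ^ n * (g t - g s)) + s ^ (n + 1) / (n + 1) * g s := by
    simp_rw [mul_sub]
    rw [intervalIntegral.integral_sub (hg.continuousOn_mul hpow)
      (hpow.intervalIntegrable.mul_const _), intervalIntegral.integral_mul_const, integral_pow]
    ring
  have hbound :
      |∫ t in (0 : ℝ)..s, t ^ n * (g t - g s)| ≤ C * (s ^ (n + 2) / ((n + 1) * (n + 2))) := by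
    calc |∫ t in (0 : ℝ)..s, t ^ n * (g t - g s)|
        ≤ ∫ t in (0 : ℝ)..s, C * (t ^ n * (s - t)) :=
          intervalIntegral.norm_integral_le_of_norm_le (f := fun t => t ^ n * (g t - g s)) hs.le
            (ae_of_all _ fun t ht => ?_)
            ((by fun_prop : Continuous fun t : ℝ => C * (t ^ n * (s - t))).intervalIntegrable 0 s)
      _ = C * (s ^ (n + 2) / ((n + 1) * (n + 2))) := by
          rw [intervalIntegral.integral_const_mul, integral_pow_mul_sub]
    rw [Real.norm_eq_abs, abs_mul, abs_of_nonneg (pow_nonneg ht.1.le n), mul_left_comm]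
    exact mul_le_mul_of_nonneg_left (hgs t (Ioc_subset_Icc_self ht)) (pow_nonneg ht.1.le n)
  calc |(n + 1) * (∫ t in (0 : ℝ)..s, t ^ n * g t) / s ^ (n + 1) - g s|
      = (n + 1) / s ^ (n + 1) * |∫ t in (0 : ℝ)..s, t ^ n * (g t - g s)| := by
        rw [hdiff, ← abs_of_pos (by positivity : (0 : ℝ) < (n + 1) / s ^ (n + 1)), ← abs_mul]
        congr 1
        field_simp
        ring
    _ ≤ (n + 1) / s ^ (n + 1) * (C * (s ^ (n + 2) / ((n + 1) * (n + 2)))) := by gcongr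
    _ = C * s / (n + 2) := by
        field_simp
        ring

theorem tendsto_mul_integral_pow_mul_div_pow {g : ℝ → ℝ} {s C : ℝ} (hs : 0 < s)
    (hg : IntervalIntegrable g volume 0 s)
    (hgs : ∀ t ∈ Icc 0 s, |g t - g s| ≤ C * (s - t)) :
    Tendsto (fun n : ℕ => (n + 1) * (∫ t in (0 : ℝ)..s, t ^ n * g t) / s ^ (n + 1))
      atTop (𝓝 (g s)) := by
  rw [← tendsto_sub_nhds_zero_iff]
  refine squeeze_zero_norm (fun n => abs_mul_integral_pow_mul_div_pow_sub_le hs hg hgs n) ?_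
  exact tendsto_const_nhds.div_atTop
    (tendsto_atTop_add_const_right _ 2 tendsto_natCast_atTop_atTop)

theorem abs_inv_sqrt_sub_inv_sqrt_le {x y : ℝ} (hy : 0 < y) (hyx : y ≤ x) :
    |(√x)⁻¹ - (√y)⁻¹| ≤ (x - y) / (y * √y) := by
  obtain ⟨a, ha, rfl⟩ : ∃ a > 0, y = a ^ 2 := ⟨√y, sqrt_pos.2 hy, (sq_sqrt hy.le).symm⟩
  obtain ⟨b, hb, rfl⟩ : ∃ b > 0, x = b ^ 2 :=
    ⟨√x, sqrt_pos.2 (hy.trans_le hyx), (sq_sqrt (hy.le.trans hyx)).symm⟩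
  have hab : a ≤ b := (pow_le_pow_iff_left₀ ha.le hb.le two_ne_zero).1 hyx
  rw [sqrt_sq ha.le, sqrt_sq hb.le, abs_sub_comm, abs_of_nonneg (sub_nonneg.2 (inv_anti₀ ha hab)),
    inv_sub_inv ha.ne' hb.ne', div_le_div_iff₀ (by positivity) (by positivity)]
  have : 0 ≤ (b - a) * (a * (b ^ 2 + a * b - a ^ 2)) :=
    mul_nonneg (sub_nonneg.2 hab) (mul_nonneg ha.le (by nlinarith))
  linarith

theorem tendsto_mul_integral_pow_mul_inv_sqrt_one_sub_div_pow {s : ℝ} (hs0 : 0 < s)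
    (hs1 : s < 1) :
    Tendsto (fun n : ℕ => (n + 1) * (∫ t in (0 : ℝ)..s, t ^ n * (√(1 - t))⁻¹) / s ^ (n + 1))
      atTop (𝓝 (√(1 - s))⁻¹) := by
  have hpos : ∀ t ∈ Icc 0 s, 0 < 1 - t := fun t ht => by linarith [ht.2]
  refine tendsto_mul_integral_pow_mul_div_pow (C := ((1 - s) * √(1 - s))⁻¹) hs0 ?_ fun t ht => ?_
  · refine ContinuousOn.intervalIntegrable ?_
    rw [uIcc_of_le hs0.le]
    exact ((continuous_const.sub continuous_id).sqrt.continuousOn).inv₀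
      fun t ht => (sqrt_pos.2 (hpos t ht)).ne'
  · calc |(√(1 - t))⁻¹ - (√(1 - s))⁻¹| ≤ ((1 - t) - (1 - s)) / ((1 - s) * √(1 - s)) :=
          abs_inv_sqrt_sub_inv_sqrt_le (by linarith) (by linarith [ht.2])
      _ = ((1 - s) * √(1 - s))⁻¹ * (s - t) := by ring

theorem regIncBeta_natCast_add_one_half {s : ℝ} (hs : s ≤ 1) (n : ℕ) :
    regIncBeta s (n + 1) (1 / 2) =
      Gamma (n + 1 + 1 / 2) / (Gamma (n + 1) * √π) *
        ∫ t in (0 : ℝ)..s, t ^ n * (√(1 - t))⁻¹ := by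
  rw [regIncBeta, Gamma_one_half_eq]
  congr 1
  refine intervalIntegral.integral_congr fun t ht => ?_
  have h1t : 0 ≤ 1 - t := sub_nonneg.2 (ht.2.trans (max_le zero_le_one hs))
  rw [add_sub_cancel_right, rpow_natCast, show (1 / 2 : ℝ) - 1 = -(1 / 2) by norm_num,
    rpow_neg h1t, sqrt_eq_rpow]

/-- Exponential decay of the double spend probability: with `s = 4pq < 1`,
`P(z) = I_s(z, 1/2) ~ s^z / sqrt(π(1-s)z)` as `z → ∞`. -/
theorem double_spend_probability_asymptotics (q : ℝ) (hq0 : 0 < q) (hq1 : q < 1/2)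
    (p : ℝ) (hp : p = 1 - q) (s : ℝ) (hs : s = 4 * p * q) :
    Tendsto (fun z : ℕ =>
        regIncBeta s z (1/2) * Real.sqrt (π * (1 - s) * z) / s ^ z)
      atTop (𝓝 1) := by
  have hs0 : 0 < s := by rw [hs, hp]; nlinarith
  have hs1 : s < 1 := by rw [hs, hp]; nlinarith [sq_nonneg (1 - 2 * q)]
  have hsqrt : 0 < √(1 - s) := sqrt_pos.2 (by linarith)
  have hGamma := tendsto_Gamma_add_half_div_Gamma_mul_sqrt.comp
    (tendsto_atTop_add_const_right _ 1 tendsto_natCast_atTop_atTop)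
  have hlim := (hGamma.mul
    (tendsto_mul_integral_pow_mul_inv_sqrt_one_sub_div_pow hs0 hs1)).mul_const √(1 - s)
  rw [one_mul, inv_mul_cancel₀ hsqrt.ne'] at hlim
  rw [← tendsto_add_atTop_iff_nat 1]
  refine hlim.congr fun n => ?_
  have hn : 0 < (n : ℝ) + 1 := by positivity
  push_cast
  rw [Function.comp_apply, regIncBeta_natCast_add_one_half hs1.le, sqrt_mul' _ hn.le,
    sqrt_mul pi_pos.le]
  field_simp
  rw [sq_sqrt hn.le]
end

section
/- The Catalan distribution of the second type, defined by P[X = 0] = p and P[X = n] = C_{n-1} (pq)^n for n ≥ 1, is a probability distribution: p + ∑_{n≥1} C_{n-1}(pq)^n = 1 for 0 < q < 1/2, p = 1 - q. -/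
/-!
With `x = pq = q (1 - q)`, the sum `S = ∑ C_n x^(n+1)` satisfies `S = x + S²` by the Catalan
recurrence and the Cauchy product, so `S` is one of the roots `q ≤ 1 - q`. The same recurrence
gives `s_{N+1} ≤ x + s_N²` for the partial sums `s_N`, so they stay below every `q ≥ 0` with
`x + q² ≤ q`; this yields both the summability and `S ≤ q`, hence `S = q` and `p + S = 1`.
-/

open Finset

theorem Finset.sum_range_sum_antidiagonal_mul_le_sq {R : Type*} [CommSemiring R] [PartialOrder R]
    [IsOrderedRing R] {a : ℕ → R} (ha : ∀ n, 0 ≤ a n) (N : ℕ) :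
    ∑ n ∈ range N, ∑ ij ∈ antidiagonal n, a ij.1 * a ij.2 ≤ (∑ n ∈ range N, a n) ^ 2 := by
  simp_rw [Nat.sum_antidiagonal_eq_sum_range_succ_mk, Nat.succ_eq_add_one]
  rw [sum_range_diag_flip N fun i j => a i * a j, sq, sum_mul_sum]
  gcongr with i
  · exact fun j _ _ => mul_nonneg (ha i) (ha j)
  · exact Nat.sub_le N i

def catalanTerm (x : ℝ) (n : ℕ) : ℝ := catalan n * x ^ (n + 1)

section catalanTerm

variable {x : ℝ}

theorem catalanTerm_nonneg (hx : 0 ≤ x) (n : ℕ) : 0 ≤ catalanTerm x n := by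
  unfold catalanTerm
  positivity

@[simp]
theorem catalanTerm_zero (x : ℝ) : catalanTerm x 0 = x := by
  simp [catalanTerm]

theorem catalanTerm_succ (x : ℝ) (n : ℕ) :
    catalanTerm x (n + 1) = ∑ ij ∈ antidiagonal n, catalanTerm x ij.1 * catalanTerm x ij.2 := by
  have hmul : ∀ ij ∈ antidiagonal n, catalanTerm x ij.1 * catalanTerm x ij.2
      = (catalan ij.1 * catalan ij.2 : ℕ) * x ^ (n + 2) := by
    rintro ⟨i, j⟩ hij
    rw [HasAntidiagonal.mem_antidiagonal] at hij
    subst hij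
    push_cast [catalanTerm]
    ring
  rw [sum_congr rfl hmul, ← sum_mul, ← Nat.cast_sum, ← catalan_succ', catalanTerm]

theorem sum_range_succ_catalanTerm_le (hx : 0 ≤ x) (N : ℕ) :
    ∑ n ∈ range (N + 1), catalanTerm x n ≤ x + (∑ n ∈ range N, catalanTerm x n) ^ 2 := by
  rw [sum_range_succ', catalanTerm_zero, add_comm]
  simp_rw [catalanTerm_succ]
  gcongr
  exact sum_range_sum_antidiagonal_mul_le_sq (catalanTerm_nonneg hx) N

theorem sum_range_catalanTerm_le {q : ℝ} (hx : 0 ≤ x) (hq : 0 ≤ q) (hxq : x + q ^ 2 ≤ q)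
    (N : ℕ) : ∑ n ∈ range N, catalanTerm x n ≤ q := by
  induction N with
  | zero => simpa using hq
  | succ N ih =>
    have hs : 0 ≤ ∑ n ∈ range N, catalanTerm x n := sum_nonneg fun n _ => catalanTerm_nonneg hx n
    calc ∑ n ∈ range (N + 1), catalanTerm x n
        ≤ x + (∑ n ∈ range N, catalanTerm x n) ^ 2 := sum_range_succ_catalanTerm_le hx N
      _ ≤ x + q ^ 2 := by gcongr
      _ ≤ q := hxq

theorem summable_catalanTerm (hx0 : 0 ≤ x) (hx : x ≤ 1 / 4) : Summable (catalanTerm x) :=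
  summable_of_sum_range_le (catalanTerm_nonneg hx0)
    (sum_range_catalanTerm_le hx0 (q := 1 / 2) (by norm_num) (by linarith))

theorem tsum_catalanTerm_eq_add_sq (hs : Summable (catalanTerm x)) :
    ∑' n, catalanTerm x n = x + (∑' n, catalanTerm x n) ^ 2 := by
  have hnorm : Summable fun n => ‖catalanTerm x n‖ := summable_norm_iff.mpr hs
  rw [sq, tsum_mul_tsum_eq_tsum_sum_antidiagonal_of_summable_norm hnorm hnorm,
    hs.tsum_eq_zero_add, catalanTerm_zero]
  simp_rw [catalanTerm_succ]

theorem tsum_catalanTerm_mul_one_sub {q : ℝ} (hq0 : 0 ≤ q) (hq1 : q ≤ 1 / 2) :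
    ∑' n, catalanTerm (q * (1 - q)) n = q := by
  have hx : 0 ≤ q * (1 - q) := mul_nonneg hq0 (by linarith)
  have hle : ∑' n, catalanTerm (q * (1 - q)) n ≤ q :=
    Real.tsum_le_of_sum_range_le (catalanTerm_nonneg hx)
      (sum_range_catalanTerm_le hx hq0 (le_of_eq (by ring)))
  have hroot := tsum_catalanTerm_eq_add_sq (summable_catalanTerm hx (by nlinarith))
  nlinarith

end catalanTerm

/-- The Catalan distribution of the second type, `P[X = 0] = p` and
`P[X = n] = C_{n-1} (pq)^n` for `n ≥ 1`, is a probability distribution: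
`p + ∑_{n≥1} C_{n-1} (pq)^n = 1`. -/
theorem catalan_distribution_second_type (q : ℝ) (hq0 : 0 < q) (hq1 : q < 1/2)
    (p : ℝ) (hp : p = 1 - q) :
    p + ∑' n : ℕ, (catalan n : ℝ) * (p * q) ^ (n + 1) = 1 := by
  subst hp
  have hS := tsum_catalanTerm_mul_one_sub hq0.le hq1.le
  rw [mul_comm q] at hS
  unfold catalanTerm at hS
  linarith
end

section
/- The Catalan distribution of the third type, defined by P[X = 0] = p, P[X = 1] = pq + pq², and P[X = n] = pq² C_{n-1} (pq)^{n-1} for n ≥ 2, is a probability distribution (the masses sum to 1) for 0 < q < 1/2, p = 1 - q. -/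
/-!
With `x = p q`, the generating function `f = ∑ Cₙ xⁿ` converges (`Cₙ ≤ 4ⁿ` and `4 p q < 1`) and,
by the Catalan recurrence and the Cauchy product, satisfies `f = 1 + x f²`, i.e.
`(p f - 1)(q f - 1) = 0`. The same recurrence shows inductively that every partial sum is at most
`1 / p`, which rules out the root `1 / q > 1 / p`; so `f = 1 / p`, and the masses add up to
`p + p q + p q² + p q² (1 / p - 1) = p + q = 1`.
-/

open Finset

lemma catalan_le_four_pow (n : ℕ) : catalan n ≤ 4 ^ n :=
  calc catalan n ≤ (n + 1) * catalan n := Nat.le_mul_of_pos_left _ n.succ_pos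
    _ = n.centralBinom := succ_mul_catalan_eq_centralBinom n
    _ ≤ 4 ^ n := Nat.centralBinom_le_four_pow n

lemma summable_catalan_mul_pow {x : ℝ} (hx0 : 0 ≤ x) (hx : 4 * x < 1) :
    Summable fun n => (catalan n : ℝ) * x ^ n := by
  refine .of_nonneg_of_le (fun n => by positivity) (fun n => ?_)
    (summable_geometric_of_lt_one (by positivity) hx)
  rw [mul_pow]
  gcongr
  exact_mod_cast catalan_le_four_pow n

lemma catalan_succ_mul_pow_succ {R : Type*} [CommSemiring R] (x : R) (n : ℕ) :
    (catalan (n + 1) : R) * x ^ (n + 1)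
      = x * ∑ ij ∈ antidiagonal n, (catalan ij.1 * x ^ ij.1) * (catalan ij.2 * x ^ ij.2) := by
  rw [catalan_succ', Nat.cast_sum, sum_mul, mul_sum]
  refine sum_congr rfl fun ij hij => ?_
  rw [← HasAntidiagonal.mem_antidiagonal.mp hij, Nat.cast_mul, pow_succ, pow_add]
  ring

lemma sum_range_sum_antidiagonal_mul_le {R : Type*} [CommSemiring R] [PartialOrder R]
    [IsOrderedRing R] {f g : ℕ → R} (hf : ∀ n, 0 ≤ f n) (hg : ∀ n, 0 ≤ g n) (N : ℕ) :
    ∑ n ∈ range N, ∑ ij ∈ antidiagonal n, f ij.1 * g ij.2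
      ≤ (∑ n ∈ range N, f n) * ∑ n ∈ range N, g n := by
  have htriangle : ∑ n ∈ range N, ∑ ij ∈ antidiagonal n, f ij.1 * g ij.2
      = ∑ ij ∈ (range N ×ˢ range N).filter (fun ij => ij.1 + ij.2 < N), f ij.1 * g ij.2 := by
    rw [← sum_biUnion]
    · congr 1
      ext ⟨i, j⟩
      simp only [mem_biUnion, mem_range, HasAntidiagonal.mem_antidiagonal, mem_filter, mem_product]
      exact ⟨fun ⟨n, hn, h⟩ => by omega, fun h => ⟨i + j, h.2, rfl⟩⟩
    · intro m _ n _ hmn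
      simp only [Function.onFun, disjoint_left, HasAntidiagonal.mem_antidiagonal]
      exact fun ij hm hn => hmn (hm.symm.trans hn)
  rw [htriangle, sum_mul_sum, ← sum_product']
  exact sum_le_sum_of_subset_of_nonneg (filter_subset _ _)
    fun ij _ _ => mul_nonneg (hf _) (hg _)

lemma sum_range_catalan_mul_pow_le {x r : ℝ} (hx : 0 ≤ x) (hr : 1 + x * r ^ 2 ≤ r) (N : ℕ) :
    ∑ n ∈ range N, (catalan n : ℝ) * x ^ n ≤ r := by
  induction N with
  | zero => simp only [sum_range_zero]; nlinarith
  | succ N ih =>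
    have hsq := sum_range_sum_antidiagonal_mul_le (f := fun n => (catalan n : ℝ) * x ^ n)
      (g := fun n => (catalan n : ℝ) * x ^ n) (fun n => by positivity) (fun n => by positivity) N
    have hS : 0 ≤ ∑ n ∈ range N, (catalan n : ℝ) * x ^ n := sum_nonneg fun n _ => by positivity
    rw [sum_range_succ']
    simp only [catalan_succ_mul_pow_succ, ← mul_sum, catalan_zero, pow_zero, Nat.cast_one,
      mul_one]
    calc x * ∑ n ∈ range N, ∑ ij ∈ antidiagonal n, (catalan ij.1 * x ^ ij.1 : ℝ)
          * (catalan ij.2 * x ^ ij.2) + 1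
        ≤ x * r ^ 2 + 1 := by
          gcongr
          exact hsq.trans (by nlinarith)
      _ ≤ r := by linarith

lemma tsum_catalan_mul_pow_eq_one_add {x : ℝ} (hx0 : 0 ≤ x) (hx : 4 * x < 1) :
    ∑' n, (catalan n : ℝ) * x ^ n = 1 + x * (∑' n, (catalan n : ℝ) * x ^ n) ^ 2 := by
  have hs := summable_catalan_mul_pow hx0 hx
  have hnonneg : ∀ n, 0 ≤ (catalan n : ℝ) * x ^ n := fun n => by positivity
  rw [sq, hs.tsum_mul_tsum_eq_tsum_sum_antidiagonal hs (hs.mul_of_nonneg hs hnonneg hnonneg),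
    hs.tsum_eq_zero_add]
  simp only [catalan_succ_mul_pow_succ, tsum_mul_left, catalan_zero, pow_zero, Nat.cast_one,
    mul_one]

theorem tsum_catalan_mul_pow_mul_eq_inv {p q : ℝ} (hq : 0 ≤ q) (hqp : q < p) (hpq : p + q = 1) :
    ∑' n, (catalan n : ℝ) * (p * q) ^ n = p⁻¹ := by
  set f := ∑' n, (catalan n : ℝ) * (p * q) ^ n with hf
  have hp : 0 < p := by linarith
  have hx0 : 0 ≤ p * q := by positivity
  have hx : 4 * (p * q) < 1 := by nlinarith
  have hroot : 1 + p * q * p⁻¹ ^ 2 = p⁻¹ := by field_simp; linarith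
  have hle : f ≤ p⁻¹ := (summable_catalan_mul_pow hx0 hx).tsum_le_of_sum_range_le
    (sum_range_catalan_mul_pow_le hx0 hroot.le)
  have hfactor : (p * f - 1) * (q * f - 1) = 0 := by
    have hfix : f = 1 + p * q * f ^ 2 := tsum_catalan_mul_pow_eq_one_add hx0 hx
    linear_combination (-1 : ℝ) * hfix - f * hpq
  have hqf : q * f < 1 := calc
    q * f ≤ q * p⁻¹ := by gcongr
    _ < 1 := by rw [← div_eq_mul_inv, div_lt_one hp]; exact hqp
  rcases mul_eq_zero.mp hfactor with h | h
  · field_simp; linarith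
  · linarith

/-- The Catalan distribution of the third type, `P[X = 0] = p`, `P[X = 1] = pq + pq²`,
and `P[X = n] = pq² C_{n-1} (pq)^{n-1}` for `n ≥ 2`, is a probability distribution. -/
theorem catalan_distribution_third_type (q : ℝ) (hq0 : 0 < q) (hq1 : q < 1/2)
    (p : ℝ) (hp : p = 1 - q) :
    p + (p * q + p * q ^ 2)
      + ∑' n : ℕ, p * q ^ 2 * (catalan (n + 1) : ℝ) * (p * q) ^ (n + 1) = 1 := by
  have hpq : p + q = 1 := by linarith
  have hqp : q < p := by linarith
  have hp0 : p ≠ 0 := by linarith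
  have hf := tsum_catalan_mul_pow_mul_eq_inv hq0.le hqp hpq
  have hs := summable_catalan_mul_pow (x := p * q) (by nlinarith) (by nlinarith)
  have hshift := hs.tsum_eq_zero_add
  simp only [hf, catalan_zero, pow_zero, Nat.cast_one, mul_one] at hshift
  have htail : ∑' n : ℕ, p * q ^ 2 * (catalan (n + 1) : ℝ) * (p * q) ^ (n + 1)
      = q ^ 2 - p * q ^ 2 := by
    simp_rw [mul_assoc (p * q ^ 2)]
    rw [tsum_mul_left, eq_sub_of_add_eq' hshift.symm]
    field_simp
  rw [htail]
  linear_combination (1 + q) * hpq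
end

section
/- In the selfish mining strategy with relative hashrates q (attacker) and p = 1 - q, connectivity parameter γ ∈ [0,1], the long-term apparent hashrate of the selfish miner is q' = [((1 + pq)(p - q) + pq)q - (1 - γ)p²q(p - q)] / (p²q + p - q), computed as q' = E[π']/(E[π] + E[π']) for the stationary distribution of the associated Markov chain. -/
/-- Transition matrix of the Eyal–Sirer selfish mining Markov chain.
States: `0` = state "0", `1` = state "0'" (competition), `k + 1` = lead `k` for `k ≥ 1`. -/
noncomputable def esTransition (p q : ℝ) (i j : ℕ) : ℝ :=
  if i = 0 then (if j = 0 then p else if j = 2 then q else 0)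
  else if i = 1 then (if j = 0 then 1 else 0)
  else if i = 2 then (if j = 1 then p else if j = 3 then q else 0)
  else if i = 3 then (if j = 0 then p else if j = 4 then q else 0)
  else (if j = i - 1 then p else if j = i + 1 then q else 0)

/-- Expected reward of the honest miners on a transition out of state `i`. -/
noncomputable def esHonestReward (p q γ : ℝ) (i : ℕ) : ℝ :=
  if i = 0 then p else if i = 1 then γ * p + 2 * (1 - γ) * p else 0

/-- Expected reward of the selfish miner on a transition out of state `i`. -/
noncomputable def esSelfishReward (p q γ : ℝ) (i : ℕ) : ℝ :=
  if i = 1 then 2 * q + γ * p else if i = 3 then 2 * p else if 4 ≤ i then p else 0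

/-!
The stationary equations at the indices `1`, `2` and `k + 3` give `μ 1 = p μ 2`, `μ 2 = q μ 0`
and, on the leads, the birth–death recurrence `μ (k + 3) = q μ (k + 2) + p μ (k + 4)`. Its flux
`p μ (k + 3) - q μ (k + 2)` is conserved, and it vanishes because a summable `μ` tends to `0`;
so the leads decay geometrically with ratio `q / p < 1`. Hence `μ` is `μ 0` times an explicit
weight, both expected rewards are `μ 0` times explicit geometric sums, and `μ 0`, which is
nonzero since `μ` sums to `1`, cancels from the ratio.
-/

open Filter Topology

theorem mul_succ_eq_of_recurrence_of_tendsto_zero {R : Type*} [CommRing R] [TopologicalSpace R]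
    [IsTopologicalRing R] [T2Space R] {p q : R} {u : ℕ → R} (hpq : p + q = 1)
    (hrec : ∀ k, u (k + 1) = q * u k + p * u (k + 2)) (hu : Tendsto u atTop (𝓝 0)) (k : ℕ) :
    p * u (k + 1) = q * u k := by
  set flux : ℕ → R := fun k => p * u (k + 1) - q * u k
  have hconst : ∀ k, flux k = flux 0 := by
    intro k
    induction k with
    | zero => rfl
    | succ k ih =>
      rw [← ih]
      linear_combination -hrec k - u (k + 1) * hpq
  have hlim : Tendsto flux atTop (𝓝 (p * 0 - q * 0)) :=
    ((hu.comp (tendsto_add_atTop_nat 1)).const_mul p).sub (hu.const_mul q)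
  rw [mul_zero, mul_zero, sub_zero] at hlim
  have hzero : flux 0 = 0 :=
    tendsto_nhds_unique (tendsto_const_nhds.congr fun k => (hconst k).symm) hlim
  exact sub_eq_zero.mp ((hconst k).trans hzero)

theorem eq_mul_pow_of_mul_succ_eq {K : Type*} [Field K] {p q : K} {u : ℕ → K} (hp : p ≠ 0)
    (h : ∀ k, p * u (k + 1) = q * u k) (k : ℕ) : u k = u 0 * (q / p) ^ k := by
  induction k with
  | zero => simp
  | succ k ih =>
    rw [pow_succ, ← mul_assoc, ← ih]
    field_simp
    linear_combination h k

theorem esTransition_apply_one (p q : ℝ) (i : ℕ) :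
    esTransition p q i 1 = if i = 2 then p else 0 := by
  grind [esTransition]

theorem esTransition_apply_two (p q : ℝ) (i : ℕ) :
    esTransition p q i 2 = if i = 0 then q else 0 := by
  grind [esTransition]

theorem esTransition_apply_add_three (p q : ℝ) (i k : ℕ) :
    esTransition p q i (k + 3) = if i = k + 2 then q else if i = k + 4 then p else 0 := by
  grind [esTransition]

section Stationary

variable {p q : ℝ} {μ : ℕ → ℝ}

theorem es_stationary_one (hstat : ∀ j, μ j = ∑' i, μ i * esTransition p q i j) :
    μ 1 = p * μ 2 := by
  simp [hstat 1, esTransition_apply_one, mul_comm]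

theorem es_stationary_two (hstat : ∀ j, μ j = ∑' i, μ i * esTransition p q i j) :
    μ 2 = q * μ 0 := by
  simp [hstat 2, esTransition_apply_two, mul_comm]

theorem es_stationary_add_three (hstat : ∀ j, μ j = ∑' i, μ i * esTransition p q i j)
    (k : ℕ) : μ (k + 3) = q * μ (k + 2) + p * μ (k + 4) := by
  rw [hstat (k + 3), tsum_eq_sum (s := {k + 2, k + 4}), Finset.sum_pair (by omega)]
  · simp [esTransition_apply_add_three, mul_comm]
  · intro i hi
    rw [Finset.mem_insert, Finset.mem_singleton, not_or] at hi
    simp [esTransition_apply_add_three, hi.1, hi.2]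

end Stationary

/-- The stationary distribution of the selfish mining chain, normalised by `μ 0 = 1`. -/
noncomputable def esStationaryWeight (p q : ℝ) : ℕ → ℝ
  | 0 => 1
  | 1 => p * q
  | k + 2 => q * (q / p) ^ k

theorem eq_mul_esStationaryWeight {p q : ℝ} {μ : ℕ → ℝ} (hpq : p + q = 1) (hp : p ≠ 0)
    (hμ : Summable μ) (hstat : ∀ j, μ j = ∑' i, μ i * esTransition p q i j) (i : ℕ) :
    μ i = μ 0 * esStationaryWeight p q i := by
  have hgeom : ∀ k, μ (k + 2) = μ 2 * (q / p) ^ k :=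
    eq_mul_pow_of_mul_succ_eq hp <| mul_succ_eq_of_recurrence_of_tendsto_zero hpq
      (es_stationary_add_three hstat) (hμ.tendsto_atTop_zero.comp (tendsto_add_atTop_nat 2))
  match i with
  | 0 => simp [esStationaryWeight]
  | 1 =>
    simp only [es_stationary_one hstat, es_stationary_two hstat, esStationaryWeight]
    ring
  | k + 2 =>
    simp only [hgeom k, es_stationary_two hstat, esStationaryWeight]
    ring

theorem tsum_esStationaryWeight_mul_esHonestReward (p q γ : ℝ) :
    ∑' i, esStationaryWeight p q i * esHonestReward p q γ i
      = p + p * q * (γ * p + 2 * (1 - γ) * p) := by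
  rw [tsum_eq_sum (s := {0, 1}), Finset.sum_pair zero_ne_one]
  · simp [esStationaryWeight, esHonestReward]
  · intro i hi
    rw [Finset.mem_insert, Finset.mem_singleton, not_or] at hi
    simp [esHonestReward, hi.1, hi.2]

theorem tsum_esStationaryWeight_mul_esSelfishReward {p q : ℝ} (γ : ℝ) (hq : 0 ≤ q)
    (hqp : q < p) :
    ∑' i, esStationaryWeight p q i * esSelfishReward p q γ i
      = p * q * (2 * q + γ * p) + 2 * q ^ 2 + q ^ 3 / (p - q) := by
  have hp : 0 < p := hq.trans_lt hqp
  have hr0 : 0 ≤ q / p := div_nonneg hq hp.le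
  have hr1 : q / p < 1 := (div_lt_one hp).2 hqp
  have hhead : ∑ i ∈ Finset.range 4, esStationaryWeight p q i * esSelfishReward p q γ i
      = p * q * (2 * q + γ * p) + q * (q / p) * (2 * p) := by
    simp [Finset.sum_range_succ, esStationaryWeight, esSelfishReward]
  have htail : ∀ k, esStationaryWeight p q (k + 4) * esSelfishReward p q γ (k + 4)
      = p * q * (q / p) ^ 2 * (q / p) ^ k := fun k => by
    simp only [esStationaryWeight, esSelfishReward, Nat.reduceEqDiff, ↓reduceIte,
      le_add_iff_nonneg_left, zero_le]
    ring
  have hsum : Summable fun i => esStationaryWeight p q i * esSelfishReward p q γ i :=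
    (summable_nat_add_iff 4).1 <| by
      simpa only [htail] using (summable_geometric_of_lt_one hr0 hr1).mul_left _
  rw [← hsum.sum_add_tsum_nat_add 4, hhead, tsum_congr htail, tsum_mul_left,
    tsum_geometric_of_lt_one hr0 hr1]
  field_simp

theorem selfish_mining_apparent_hashrate_general (q : ℝ) (hq0 : 0 < q) (hq1 : q < 1/2)
    (p : ℝ) (hp : p = 1 - q) (γ : ℝ)
    (μ : ℕ → ℝ) (hμsum : Summable μ) (hμ1 : ∑' i, μ i = 1)
    (hstat : ∀ j, μ j = ∑' i, μ i * esTransition p q i j) :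
    (∑' i, μ i * esSelfishReward p q γ i)
      / ((∑' i, μ i * esHonestReward p q γ i) + ∑' i, μ i * esSelfishReward p q γ i)
    = (((1 + p * q) * (p - q) + p * q) * q - (1 - γ) * p ^ 2 * q * (p - q))
        / (p ^ 2 * q + p - q) := by
  have hp0 : 0 < p := by linarith
  have hqp : q < p := by linarith
  have hμ : ∀ f : ℕ → ℝ, ∑' i, μ i * f i = μ 0 * ∑' i, esStationaryWeight p q i * f i := by
    intro f
    rw [← tsum_mul_left]
    refine tsum_congr fun i => ?_
    rw [eq_mul_esStationaryWeight (by linarith) hp0.ne' hμsum hstat i, mul_assoc]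
  have hμ0 : μ 0 ≠ 0 := by
    intro h
    have htotal := hμ fun _ => 1
    simp only [mul_one, hμ1, h, zero_mul] at htotal
    exact one_ne_zero htotal
  have hden : 0 < p + p * q * (γ * p + 2 * (1 - γ) * p)
      + (p * q * (2 * q + γ * p) + 2 * q ^ 2 + q ^ 3 / (p - q)) := by
    have : 0 < q ^ 3 / (p - q) := div_pos (by positivity) (by linarith)
    -- the `γ`-terms cancel
    nlinarith [mul_pos hq0 hp0]
  have hM : 0 < p ^ 2 * q + p - q := by nlinarith [mul_pos (pow_pos hp0 2) hq0]
  rw [hμ, hμ, tsum_esStationaryWeight_mul_esHonestReward,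
    tsum_esStationaryWeight_mul_esSelfishReward γ hq0.le hqp, ← mul_add,
    mul_div_mul_left _ _ hμ0, div_eq_div_iff hden.ne' hM.ne']
  have : p - q ≠ 0 := by linarith
  field_simp
  subst hp
  ring

/-- Eyal–Sirer: the long-term apparent hashrate of the selfish miner, computed as
`q' = E[π']/(E[π] + E[π'])` for the stationary distribution `μ` of the selfish mining
Markov chain, equals
`[((1 + pq)(p - q) + pq)q - (1 - γ)p²q(p - q)] / (p²q + p - q)`. -/
theorem selfish_mining_apparent_hashrate (q : ℝ) (hq0 : 0 < q) (hq1 : q < 1/2)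
    (p : ℝ) (hp : p = 1 - q) (γ : ℝ) (hγ0 : 0 ≤ γ) (hγ1 : γ ≤ 1)
    (μ : ℕ → ℝ) (hμpos : ∀ i, 0 ≤ μ i) (hμsum : Summable μ) (hμ1 : ∑' i, μ i = 1)
    (hstat : ∀ j, μ j = ∑' i, μ i * esTransition p q i j) :
    (∑' i, μ i * esSelfishReward p q γ i)
      / ((∑' i, μ i * esHonestReward p q γ i) + ∑' i, μ i * esSelfishReward p q γ i)
    = (((1 + p * q) * (p - q) + p * q) * q - (1 - γ) * p ^ 2 * q * (p - q))
        / (p ^ 2 * q + p - q) :=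
  selfish_mining_apparent_hashrate_general q hq0 hq1 p hp γ μ hμsum hμ1 hstat
end

section
/- Let 0 < q < 1/2, p = 1 - q, γ ∈ [0,1], and q' = [((1+pq)(p-q)+pq)q - (1-γ)p²q(p-q)]/(p²q + p - q). The selfish mining strategy is strictly more profitable than honest mining if and only if q' > q; equivalently, q' > q ⟺ ((1+pq)(p-q) + pq) - (1-γ)p²(p-q) > p²q + p - q. -/
/-- Selfish mining beats honest mining iff `q' > q`, where `q'` is the Eyal–Sirer
apparent hashrate; equivalently
`((1+pq)(p-q) + pq) - (1-γ)p²(p-q) > p²q + p - q`. -/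
theorem selfish_mining_profitability_condition (q : ℝ) (hq0 : 0 < q) (hq1 : q < 1/2)
    (p : ℝ) (hp : p = 1 - q) (γ : ℝ) (hγ0 : 0 ≤ γ) (hγ1 : γ ≤ 1) :
    (((1 + p * q) * (p - q) + p * q) * q - (1 - γ) * p ^ 2 * q * (p - q))
        / (p ^ 2 * q + p - q) > q
      ↔ ((1 + p * q) * (p - q) + p * q) - (1 - γ) * p ^ 2 * (p - q)
          > p ^ 2 * q + p - q := by
  have hd : 0 < p ^ 2 * q + p - q := by nlinarith [sq_nonneg p, sq_nonneg (p - q)]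
  rw [gt_iff_lt, lt_div_iff₀ hd]
  constructor
  · intro h; nlinarith
  · intro h; nlinarith
end
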